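/- Dijkstra's greedy step is valid: let S be a set of vertices containing the origin s such that the shortest-path distance d(s,u) is known for all u in S, and let v ∉ S minimize, over vertices outside S, the quantity min_{u ∈ S, u~v} (d(s,u) + w(u,v)). Then d(s,v) equals this minimum. -/
import Mathlib


open SimpleGraph

noncomputable def wcost {V : Type} (w : V → V → ℝ) {G : SimpleGraph V} {u v : V}
    (p : G.Walk u v) : ℝ :=
  (p.darts.map fun d => w d.toProd.1 d.toProd.2).sum

/-- Shortest-path distance: the infimum of walk costs between two vertices. -/
noncomputable def gdist {V : Type} (G : SimpleGraph V) (w : V → V → ℝ) (u v : V) : ℝ :=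
  sInf {c : ℝ | ∃ p : G.Walk u v, wcost w p = c}

namespace DijAux

variable {V : Type} {G : SimpleGraph V} (w : V → V → ℝ)

lemma wcost_nil {u : V} : wcost w (Walk.nil : G.Walk u u) = 0 := by simp [wcost]

lemma wcost_cons {a b c : V} (h : G.Adj a b) (p : G.Walk b c) :
    wcost w (Walk.cons h p) = w a b + wcost w p := by
  simp [wcost]

lemma wcost_concat {a b c : V} (p : G.Walk a b) (h : G.Adj b c) :
    wcost w (p.concat h) = wcost w p + w b c := by
  simp [wcost, Walk.darts_concat]

lemma wcost_nonneg (hpos : ∀ a b, G.Adj a b → 0 < w a b) {u v : V} (p : G.Walk u v) :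
    0 ≤ wcost w p := by
  induction p with
  | nil => simp [wcost_nil]
  | cons h q ih =>
    rw [wcost_cons]
    have := hpos _ _ h
    linarith

def cset (u v : V) : Set ℝ := {c : ℝ | ∃ p : G.Walk u v, wcost w p = c}

lemma gdist_def (u v : V) : gdist G w u v = sInf (cset (G := G) w u v) := rfl

lemma cset_bdd (hpos : ∀ a b, G.Adj a b → 0 < w a b) (u v : V) :
    BddBelow (cset (G := G) w u v) := by
  refine ⟨0, ?_⟩
  rintro c ⟨p, rfl⟩
  exact wcost_nonneg w hpos p

lemma cset_ne (hG : G.Connected) (u v : V) : (cset (G := G) w u v).Nonempty := by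
  obtain ⟨p⟩ := hG.preconnected u v
  exact ⟨wcost w p, p, rfl⟩

lemma gdist_le (hpos : ∀ a b, G.Adj a b → 0 < w a b) {u v : V} (p : G.Walk u v) :
    gdist G w u v ≤ wcost w p :=
  csInf_le (cset_bdd w hpos u v) ⟨p, rfl⟩

lemma gdist_nonneg (hpos : ∀ a b, G.Adj a b → 0 < w a b) (u v : V) :
    0 ≤ gdist G w u v := by
  apply Real.sInf_nonneg
  rintro c ⟨p, rfl⟩
  exact wcost_nonneg w hpos p

lemma gdist_self_nonpos (hpos : ∀ a b, G.Adj a b → 0 < w a b) (u : V) :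
    gdist G w u u ≤ 0 := by
  have := gdist_le w hpos (Walk.nil : G.Walk u u)
  rwa [wcost_nil] at this

lemma gdist_triangle (hpos : ∀ a b, G.Adj a b → 0 < w a b) (hG : G.Connected)
    (s a b : V) (h : G.Adj a b) :
    gdist G w s b ≤ gdist G w s a + w a b := by
  rw [gdist_def w s a, ← sub_le_iff_le_add]
  apply le_csInf (cset_ne w hG s a)
  rintro c ⟨p, rfl⟩
  have h2 := gdist_le w hpos (p.concat h)
  rw [wcost_concat] at h2
  linarith

end DijAux

open DijAux in
/-- Validity of Dijkstra's greedy step: if `v ∉ S` minimizes, over vertices outside `S`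
adjacent to `S`, the quantity `min_{u ∈ S, u ~ x} (d s u + w u x)`, then `d s v`
equals this minimum. -/
theorem dijkstra_greedy_step {V : Type} [Fintype V] (G : SimpleGraph V) (hG : G.Connected)
    (w : V → V → ℝ) (hpos : ∀ a b, G.Adj a b → 0 < w a b) (s : V) (S : Set V) (hs : s ∈ S)
    (v : V) (hv : v ∉ S) (hadj : ∃ u ∈ S, G.Adj u v)
    (hmin : ∀ x : V, x ∉ S → (∃ u ∈ S, G.Adj u x) →
      sInf {c : ℝ | ∃ u ∈ S, G.Adj u v ∧ c = gdist G w s u + w u v} ≤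
        sInf {c : ℝ | ∃ u ∈ S, G.Adj u x ∧ c = gdist G w s u + w u x}) :
    gdist G w s v = sInf {c : ℝ | ∃ u ∈ S, G.Adj u v ∧ c = gdist G w s u + w u v} := by
  have hTbdd : ∀ x : V, BddBelow {c : ℝ | ∃ u ∈ S, G.Adj u x ∧ c = gdist G w s u + w u x} := by
    intro x
    refine ⟨0, ?_⟩
    rintro c ⟨u, hu, hadjux, rfl⟩
    have := gdist_nonneg w hpos s u
    have := hpos _ _ hadjux
    linarith
  have hss : gdist G w s s ≤ 0 := gdist_self_nonpos w hpos s
  have key : ∀ (a : V) (p : G.Walk a v), a ∈ S →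
      sInf {c : ℝ | ∃ u ∈ S, G.Adj u v ∧ c = gdist G w s u + w u v} ≤
        gdist G w s a + wcost w p := by
    intro a p
    induction p with
    | nil => intro ha; exact absurd ha hv
    | @cons a b _ h q ih =>
      intro ha
      have ih' := ih hv hadj hmin
      have hq : 0 ≤ wcost w q := wcost_nonneg w hpos q
      rw [wcost_cons]
      by_cases hb : b ∈ S
      · have h1 := ih' hb
        have h2 := gdist_triangle w hpos hG s a b h
        linarith
      · have h1 := hmin b hb ⟨a, ha, h⟩
        have h2 : sInf {c : ℝ | ∃ u ∈ S, G.Adj u b ∧ c = gdist G w s u + w u b} ≤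
            gdist G w s a + w a b := csInf_le (hTbdd b) ⟨a, ha, h, rfl⟩
        linarith
  apply le_antisymm
  · apply le_csInf
    · obtain ⟨u, hu, huv⟩ := hadj
      exact ⟨gdist G w s u + w u v, u, hu, huv, rfl⟩
    · rintro c ⟨u, hu, huv, rfl⟩
      exact gdist_triangle w hpos hG s u v huv
  · rw [gdist_def]
    apply le_csInf (cset_ne w hG s v)
    rintro c ⟨p, rfl⟩
    have := key s p hs
    linarith
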